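/- arXiv:1903.03580 — 2 statements merged into one kernel-verified Lean document; each statement's English description precedes it below -/
import Mathlib

section
/- Fix M > 1 and a sign σ ∈ {+1, −1}. There exists a constant C > 0 such that for all ξ ∈ ℝ with ξ ≠ 0 and all η ∈ ℝ, ∫_ℝ ⟨(θ² + σ η²)/ξ⟩^{−M} dθ ≤ C |ξ|^{1/2} ⟨η²/ξ⟩^{−1/2}. -/
/-!
The substitution `θ = |ξ|^{1/2} s` turns the integral into `|ξ|^{1/2} ∫ ⟨s² + b⟩^{-M} ds`
with `b = σ η² / |ξ|`, and `⟨b⟩ = ⟨η²/ξ⟩` because `σ = ±1`. Since `⟨x⟩` is comparable to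
`1 + |x|`, it remains to bound `∫ (1 + |s² + b|)^{-M} ds` by a multiple of `(1 + |b|)^{-1/2}`.
For `b ≥ -1` the weight `1 + |s² + b|` dominates both `1 + |b|` and `(1 + |s|)²`, so the
integrand is at most a multiple of `(1 + |b|)^{-1/2} (1 + |s|)^{-(2M-1)}`. For `b = -d²` with
`d ≥ 1` one has `|s² - d²| ≥ d |s ∓ d|` for `±s ≥ 0`: the integrand lives in windows of width
`1/d` around `±d`, and `1/d ≈ (1 + |b|)^{-1/2}`.
-/

open MeasureTheory
open scoped ENNReal

/-- Japanese bracket `⟨x⟩ = (1 + x²)^{1/2}`. -/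
noncomputable def jap (x : ℝ) : ℝ := Real.sqrt (1 + x ^ 2)

lemma jap_pos (x : ℝ) : 0 < jap x := Real.sqrt_pos.mpr (by positivity)

lemma jap_neg (x : ℝ) : jap (-x) = jap x := by rw [jap, jap, neg_sq]

lemma jap_div_abs (x y : ℝ) : jap (x / |y|) = jap (x / y) := by
  rcases abs_choice y with h | h <;> rw [h]
  rw [div_neg, jap_neg]

lemma jap_le_one_add_abs (x : ℝ) : jap x ≤ 1 + |x| :=
  Real.sqrt_le_iff.mpr ⟨by positivity, by nlinarith [abs_nonneg x, sq_abs x]⟩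

lemma one_add_abs_le_two_mul_jap (x : ℝ) : 1 + |x| ≤ 2 * jap x := by
  refine (pow_le_pow_iff_left₀ (by positivity) (by linarith [jap_pos x]) two_ne_zero).1 ?_
  rw [mul_pow, jap, Real.sq_sqrt (by positivity)]
  nlinarith [sq_abs x, sq_nonneg (|x| - 1)]

lemma rpow_neg_le_of_le_mul {x y c e : ℝ} (hy : 0 < y) (hc : 0 < c) (h : y ≤ c * x)
    (he : 0 ≤ e) : x ^ (-e) ≤ c ^ e * y ^ (-e) := by
  have hx : y / c ≤ x := (div_le_iff₀' hc).2 h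
  calc x ^ (-e) ≤ (y / c) ^ (-e) :=
        Real.rpow_le_rpow_of_nonpos (by positivity) hx (neg_nonpos.2 he)
    _ = c ^ e * y ^ (-e) := by
        rw [Real.div_rpow hy.le hc.le, Real.rpow_neg hc.le, div_inv_eq_mul, mul_comm]

lemma jap_rpow_neg_le (x : ℝ) {e : ℝ} (he : 0 ≤ e) :
    jap x ^ (-e) ≤ 2 ^ e * (1 + |x|) ^ (-e) :=
  rpow_neg_le_of_le_mul (by positivity) two_pos (one_add_abs_le_two_mul_jap x) he

lemma one_add_abs_sq_add_rpow_neg_le {M b : ℝ} (hM : 1 ≤ M) (hb : -1 ≤ b) (s : ℝ) :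
    (1 + |s ^ 2 + b|) ^ (-M) ≤ 4 ^ M * (1 + |b|) ^ (-(1 / 2 : ℝ)) * (1 + |s|) ^ (-M) := by
  set w := 1 + |s ^ 2 + b| with hw_def
  have hw : 0 < w := by positivity
  have hbw : 1 + |b| ≤ 2 * w := by
    rcases le_total 0 b with h | h
    · rw [hw_def, abs_of_nonneg h, abs_of_nonneg (by positivity : 0 ≤ s ^ 2 + b)]
      nlinarith [sq_nonneg s]
    · rw [abs_of_nonpos h]; linarith [abs_nonneg (s ^ 2 + b)]
  have hsw : (1 + |s|) ^ 2 ≤ 4 * w := by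
    nlinarith [sq_abs s, sq_nonneg (|s| - 1), le_abs_self (s ^ 2 + b), abs_nonneg (s ^ 2 + b)]
  have hsplit : w ^ (-M) = w ^ (-(1 / 2 : ℝ)) * w ^ (-(M - 1 / 2)) := by
    rw [← Real.rpow_add hw]; ring_nf
  have h1 : w ^ (-(1 / 2 : ℝ)) ≤ 4 ^ (1 / 2 : ℝ) * (1 + |b|) ^ (-(1 / 2 : ℝ)) :=
    (rpow_neg_le_of_le_mul (by positivity) two_pos hbw (by norm_num)).trans
      (by gcongr; norm_num)
  have h2 : w ^ (-(M - 1 / 2)) ≤ 4 ^ (M - 1 / 2) * (1 + |s|) ^ (-M) := by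
    refine (rpow_neg_le_of_le_mul (by positivity) four_pos hsw (by linarith)).trans ?_
    gcongr
    rw [← Real.rpow_natCast, ← Real.rpow_mul (by positivity)]
    exact Real.rpow_le_rpow_of_exponent_le (by linarith [abs_nonneg s]) (by push_cast; linarith)
  calc w ^ (-M) ≤ (4 ^ (1 / 2 : ℝ) * (1 + |b|) ^ (-(1 / 2 : ℝ))) *
        (4 ^ (M - 1 / 2) * (1 + |s|) ^ (-M)) := by rw [hsplit]; gcongr
    _ = 4 ^ M * (1 + |b|) ^ (-(1 / 2 : ℝ)) * (1 + |s|) ^ (-M) := by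
        rw [show (4 : ℝ) ^ M = 4 ^ (1 / 2 : ℝ) * 4 ^ (M - 1 / 2) by
          rw [← Real.rpow_add four_pos]; ring_nf]
        ring

lemma one_add_abs_sq_sub_sq_rpow_neg_le {M d : ℝ} (hM : 0 ≤ M) (hd : 0 ≤ d) (s : ℝ) :
    (1 + |s ^ 2 - d ^ 2|) ^ (-M) ≤
      (1 + |d * s - d ^ 2|) ^ (-M) + (1 + |d * s + d ^ 2|) ^ (-M) := by
  have hfac : s ^ 2 - d ^ 2 = (s - d) * (s + d) := by ring
  rcases le_total 0 s with hs | hs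
  · have h : |d * s - d ^ 2| ≤ |s ^ 2 - d ^ 2| := by
      rw [hfac, abs_mul, show d * s - d ^ 2 = (s - d) * d by ring, abs_mul, abs_of_nonneg hd]
      gcongr
      rw [abs_of_nonneg (by linarith)]; linarith
    have := Real.rpow_le_rpow_of_nonpos (by positivity)
      (by linarith : 1 + |d * s - d ^ 2| ≤ 1 + |s ^ 2 - d ^ 2|) (neg_nonpos.2 hM)
    linarith [Real.rpow_nonneg (by positivity : 0 ≤ 1 + |d * s + d ^ 2|) (-M)]
  · have h : |d * s + d ^ 2| ≤ |s ^ 2 - d ^ 2| := by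
      rw [hfac, abs_mul, show d * s + d ^ 2 = d * (s + d) by ring, abs_mul, abs_of_nonneg hd]
      gcongr
      rw [abs_of_nonpos (by linarith)]; linarith
    have := Real.rpow_le_rpow_of_nonpos (by positivity)
      (by linarith : 1 + |d * s + d ^ 2| ≤ 1 + |s ^ 2 - d ^ 2|) (neg_nonpos.2 hM)
    linarith [Real.rpow_nonneg (by positivity : 0 ≤ 1 + |d * s - d ^ 2|) (-M)]

lemma inv_le_two_mul_one_add_sq_rpow {d : ℝ} (hd : 1 ≤ d) :
    d⁻¹ ≤ 2 * (1 + d ^ 2) ^ (-(1 / 2 : ℝ)) := by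
  have hd0 : 0 < d := by linarith
  have h : (1 + d ^ 2) ^ (1 / 2 : ℝ) ≤ 2 * d := by
    rw [← Real.sqrt_eq_rpow]
    exact Real.sqrt_le_iff.mpr ⟨by positivity, by nlinarith⟩
  rw [Real.rpow_neg (by positivity), ← div_eq_mul_inv, le_div_iff₀ (by positivity)]
  calc d⁻¹ * (1 + d ^ 2) ^ (1 / 2 : ℝ) ≤ d⁻¹ * (2 * d) := by gcongr
    _ = 2 := by field_simp

lemma lintegral_ofReal_le_ofReal_mul {f g : ℝ → ℝ} {c : ℝ} (hc : 0 ≤ c)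
    (h : ∀ x, f x ≤ c * g x) :
    ∫⁻ x, ENNReal.ofReal (f x) ≤ ENNReal.ofReal c * ∫⁻ x, ENNReal.ofReal (g x) := by
  rw [← lintegral_const_mul' _ _ ENNReal.ofReal_ne_top]
  exact lintegral_mono fun x => (ENNReal.ofReal_le_ofReal (h x)).trans
    (ENNReal.ofReal_mul hc).le

lemma lintegral_comp_mul_left (f : ℝ → ℝ≥0∞) {a : ℝ} (ha : a ≠ 0) :
    ∫⁻ x, f (a * x) = ENNReal.ofReal |a⁻¹| * ∫⁻ x, f x := by
  have h := lintegral_map_equiv f (MeasurableEquiv.mulLeft₀ a ha) (μ := volume)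
  rw [MeasurableEquiv.coe_mulLeft₀, Real.map_volume_mul_left ha, lintegral_smul_measure] at h
  exact h.symm

lemma lintegral_comp_mul_add (f : ℝ → ℝ≥0∞) {a : ℝ} (ha : a ≠ 0) (e : ℝ) :
    ∫⁻ x, f (a * x + e) = ENNReal.ofReal |a⁻¹| * ∫⁻ x, f x := by
  rw [lintegral_comp_mul_left (fun y => f (y + e)) ha, lintegral_add_right_eq_self f e]

lemma lintegral_one_add_abs_rpow_neg_pos (M : ℝ) :
    0 < ∫⁻ u : ℝ, ENNReal.ofReal ((1 + |u|) ^ (-M)) := by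
  rw [lintegral_pos_iff_support (by fun_prop)]
  have : Function.support (fun u : ℝ => ENNReal.ofReal ((1 + |u|) ^ (-M))) = Set.univ :=
    Function.support_eq_univ fun u => (ENNReal.ofReal_pos.2 (by positivity)).ne'
  simp [this]

lemma lintegral_one_add_abs_rpow_neg_ne_top {M : ℝ} (hM : 1 < M) :
    ∫⁻ u : ℝ, ENNReal.ofReal ((1 + |u|) ^ (-M)) ≠ ∞ :=
  (finite_integral_one_add_norm (E := ℝ) (μ := volume) (by simpa using hM)).ne

lemma lintegral_one_add_abs_sq_sub_sq_rpow_neg_le {M d : ℝ} (hM : 0 ≤ M) (hd : 0 < d) :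
    ∫⁻ s : ℝ, ENNReal.ofReal ((1 + |s ^ 2 - d ^ 2|) ^ (-M)) ≤
      ENNReal.ofReal (2 * d⁻¹) * ∫⁻ u : ℝ, ENNReal.ofReal ((1 + |u|) ^ (-M)) := by
  set g : ℝ → ℝ≥0∞ := fun u => ENNReal.ofReal ((1 + |u|) ^ (-M))
  have hscale (e : ℝ) : ∫⁻ s, g (d * s + e) = ENNReal.ofReal d⁻¹ * ∫⁻ u, g u := by
    rw [lintegral_comp_mul_add g hd.ne' e, abs_of_pos (inv_pos.2 hd)]
  calc ∫⁻ s : ℝ, ENNReal.ofReal ((1 + |s ^ 2 - d ^ 2|) ^ (-M))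
      ≤ ∫⁻ s, g (d * s + -d ^ 2) + g (d * s + d ^ 2) := lintegral_mono fun s =>
        (ENNReal.ofReal_le_ofReal (by
          simpa only [← sub_eq_add_neg] using one_add_abs_sq_sub_sq_rpow_neg_le hM hd.le s)).trans
        ENNReal.ofReal_add_le
    _ = (ENNReal.ofReal d⁻¹ * ∫⁻ u, g u) + ENNReal.ofReal d⁻¹ * ∫⁻ u, g u := by
        rw [lintegral_add_left (by fun_prop), hscale, hscale]
    _ = ENNReal.ofReal (2 * d⁻¹) * ∫⁻ u, g u := by
        rw [← two_mul, ← mul_assoc, ENNReal.ofReal_mul zero_le_two, ENNReal.ofReal_ofNat]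

lemma lintegral_one_add_abs_sq_add_rpow_neg_le {M : ℝ} (hM : 1 < M) (b : ℝ) :
    ∫⁻ s : ℝ, ENNReal.ofReal ((1 + |s ^ 2 + b|) ^ (-M)) ≤
      ENNReal.ofReal (4 * 4 ^ M * (1 + |b|) ^ (-(1 / 2 : ℝ))) *
        ∫⁻ u : ℝ, ENNReal.ofReal ((1 + |u|) ^ (-M)) := by
  rcases le_or_gt (-1) b with hb | hb
  · refine (lintegral_ofReal_le_ofReal_mul (by positivity)
      (one_add_abs_sq_add_rpow_neg_le hM.le hb)).trans ?_
    gcongr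
    nlinarith [Real.rpow_pos_of_pos four_pos M,
      Real.rpow_pos_of_pos (by positivity : 0 < 1 + |b|) (-(1 / 2 : ℝ))]
  · obtain ⟨d, hd, rfl⟩ : ∃ d : ℝ, 1 ≤ d ∧ b = -d ^ 2 :=
      ⟨Real.sqrt (-b), Real.le_sqrt_of_sq_le (by linarith),
        by rw [Real.sq_sqrt (by linarith)]; ring⟩
    simp_rw [← sub_eq_add_neg, abs_neg, abs_sq]
    refine (lintegral_one_add_abs_sq_sub_sq_rpow_neg_le (by linarith) (by linarith)).trans ?_
    gcongr ENNReal.ofReal ?_ * _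
    have h4M : 1 ≤ (4 : ℝ) ^ M := Real.one_le_rpow (by norm_num) (by linarith)
    nlinarith [inv_le_two_mul_one_add_sq_rpow hd,
      Real.rpow_pos_of_pos (by positivity : 0 < 1 + d ^ 2) (-(1 / 2 : ℝ))]

lemma lintegral_jap_sq_add_rpow_neg_le {M : ℝ} (hM : 1 < M) (b : ℝ) :
    ∫⁻ s : ℝ, ENNReal.ofReal (jap (s ^ 2 + b) ^ (-M)) ≤
      ENNReal.ofReal (4 * 8 ^ M * jap b ^ (-(1 : ℝ) / 2)) *
        ∫⁻ u : ℝ, ENNReal.ofReal ((1 + |u|) ^ (-M)) := by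
  have hb : (1 + |b|) ^ (-(1 / 2 : ℝ)) ≤ jap b ^ (-(1 : ℝ) / 2) := by
    rw [neg_div]
    exact Real.rpow_le_rpow_of_nonpos (jap_pos b) (jap_le_one_add_abs b) (by norm_num)
  calc ∫⁻ s : ℝ, ENNReal.ofReal (jap (s ^ 2 + b) ^ (-M))
      ≤ ENNReal.ofReal (2 ^ M) * ∫⁻ s : ℝ, ENNReal.ofReal ((1 + |s ^ 2 + b|) ^ (-M)) :=
        lintegral_ofReal_le_ofReal_mul (by positivity)
          fun s => jap_rpow_neg_le _ (by linarith)
    _ ≤ ENNReal.ofReal (2 ^ M) * (ENNReal.ofReal (4 * 4 ^ M * (1 + |b|) ^ (-(1 / 2 : ℝ))) *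
        ∫⁻ u : ℝ, ENNReal.ofReal ((1 + |u|) ^ (-M))) := by
        gcongr; exact lintegral_one_add_abs_sq_add_rpow_neg_le hM b
    _ ≤ _ := by
        rw [← mul_assoc, ← ENNReal.ofReal_mul (by positivity)]
        gcongr ENNReal.ofReal ?_ * _
        rw [show (8 : ℝ) ^ M = 2 ^ M * 4 ^ M by
          rw [← Real.mul_rpow zero_le_two zero_le_four]; norm_num]
        have := Real.rpow_pos_of_pos (zero_lt_two : (0 : ℝ) < 2) M
        have := Real.rpow_pos_of_pos four_pos M
        calc 2 ^ M * (4 * 4 ^ M * (1 + |b|) ^ (-(1 / 2 : ℝ)))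
            = 4 * (2 ^ M * 4 ^ M) * (1 + |b|) ^ (-(1 / 2 : ℝ)) := by ring
          _ ≤ _ := by gcongr

/-- For `M > 1` and a sign `σ = ±1`:
`∫_ℝ ⟨(θ² + ση²)/ξ⟩^{−M} dθ ≤ C |ξ|^{1/2} ⟨η²/ξ⟩^{−1/2}` for all `ξ ≠ 0` and `η`. -/
theorem stmt7 (M σ : ℝ) (hM : 1 < M) (hσ : σ = 1 ∨ σ = -1) :
    ∃ C > (0:ℝ), ∀ ξ η : ℝ, ξ ≠ 0 →
      ∫⁻ θ : ℝ, ENNReal.ofReal (jap ((θ ^ 2 + σ * η ^ 2) / ξ) ^ (-M)) ≤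
        ENNReal.ofReal (C * |ξ| ^ ((1:ℝ)/2) * jap (η ^ 2 / ξ) ^ (-(1:ℝ)/2)) := by
  obtain ⟨K, hK, hA⟩ : ∃ K : ℝ, 0 < K ∧
      ∫⁻ u : ℝ, ENNReal.ofReal ((1 + |u|) ^ (-M)) = ENNReal.ofReal K :=
    ⟨_, ENNReal.toReal_pos (lintegral_one_add_abs_rpow_neg_pos M).ne'
      (lintegral_one_add_abs_rpow_neg_ne_top hM),
      (ENNReal.ofReal_toReal (lintegral_one_add_abs_rpow_neg_ne_top hM)).symm⟩
  refine ⟨4 * 8 ^ M * K, by positivity, fun ξ η hξ => ?_⟩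
  have ha : 0 < Real.sqrt |ξ| := Real.sqrt_pos.2 (abs_pos.2 hξ)
  have hrescale (θ : ℝ) : jap ((θ ^ 2 + σ * η ^ 2) / ξ) =
      jap (((Real.sqrt |ξ|)⁻¹ * θ) ^ 2 + σ * η ^ 2 / |ξ|) := by
    rw [mul_pow, inv_pow, Real.sq_sqrt (abs_nonneg ξ), ← jap_div_abs, add_div, inv_mul_eq_div]
  have hση : jap (σ * η ^ 2 / |ξ|) = jap (η ^ 2 / ξ) := by
    rw [jap_div_abs]
    rcases hσ with rfl | rfl
    · rw [one_mul]
    · rw [neg_one_mul, neg_div, jap_neg]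
  calc ∫⁻ θ : ℝ, ENNReal.ofReal (jap ((θ ^ 2 + σ * η ^ 2) / ξ) ^ (-M))
      = ENNReal.ofReal (Real.sqrt |ξ|) *
          ∫⁻ s : ℝ, ENNReal.ofReal (jap (s ^ 2 + σ * η ^ 2 / |ξ|) ^ (-M)) := by
        simp_rw [hrescale]
        rw [lintegral_comp_mul_left
          (fun s => ENNReal.ofReal (jap (s ^ 2 + σ * η ^ 2 / |ξ|) ^ (-M))) (inv_ne_zero ha.ne'),
          inv_inv, abs_of_pos ha]
    _ ≤ ENNReal.ofReal (Real.sqrt |ξ|) * (ENNReal.ofReal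
          (4 * 8 ^ M * jap (η ^ 2 / ξ) ^ (-(1 : ℝ) / 2)) * ENNReal.ofReal K) := by
        rw [← hση, ← hA]
        gcongr
        exact lintegral_jap_sq_add_rpow_neg_le hM _
    _ = _ := by
        have := Real.rpow_pos_of_pos (jap_pos (η ^ 2 / ξ)) (-(1 : ℝ) / 2)
        rw [← ENNReal.ofReal_mul (by positivity), ← ENNReal.ofReal_mul ha.le,
          Real.sqrt_eq_rpow]
        ring_nf
end

section
/- There exists a constant C > 0 such that for every nonnegative measurable function ψ on ℝ × (0,∞), ( ∫_{ℝ³} ( ∫_0^∞ [⟨(η² + θ²)/ξ⟩^{1/2} / ⟨τ − ξ⁵ − η²/ξ⟩²] · [η/(η² + θ²)] ψ(ξ,η) dη )² dτ dθ dξ )^{1/2} ≤ C ( ∫_ℝ ∫_0^∞ ψ(ξ,η)² dη dξ )^{1/2}, where the outer integration is over (τ, θ, ξ) ∈ ℝ × ℝ × (ℝ \ {0}). (This is the core estimate proving ‖μ(t) W₂ h‖_{X^{0,1/2}} ≲ ‖χ_{t>0} h‖_{ℋ⁰_{x,t}} for the boundary operator W₂.) -/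
/-!
Since `⟨z⟩^{1/2} ≤ 1 + |z|^{1/2}`, the kernel is dominated by `⟨τ - ξ⁵ - η²/ξ⟩⁻²` times the sum of
the Poisson kernel `η / (η² + θ²)` and `|ξ|^{-1/2} η (η² + θ²)^{-1/2}`. For fixed `ξ`, each piece is
handled by a Schur test: Cauchy–Schwarz in `η` with the weights `η^{1/2}, η^{3/2}` (resp. `2η` and
`η / (2|ξ| (η² + θ²))`), then `∫ ⟨τ - a⟩⁻² dτ = π`, then the scaling bound
`∫₀^∞ t^p / (t² + a²) dt ≲ a^{p-1}` for `|p| < 1`. In the second piece the `η`-integral of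
`2η ⟨τ - ξ⁵ - η²/ξ⟩⁻²` is computed by the substitution `u = η²/ξ`; its Jacobian produces the
factor `|ξ|` that cancels the `|ξ|⁻¹` of the kernel. Integrating in `ξ` gives `C = 14`.
-/

open MeasureTheory
open scoped ENNReal

open Set Real Function

lemma jap_sq (x : ℝ) : jap x ^ 2 = 1 + x ^ 2 := sq_sqrt (by positivity)

lemma jap_rpow_half_le (z : ℝ) : jap z ^ (1 / 2 : ℝ) ≤ 1 + √|z| := by
  have hjap : jap z ≤ (1 + √|z|) ^ 2 := by
    rw [jap, Real.sqrt_le_left (by positivity)]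
    have := Real.sq_sqrt (abs_nonneg z)
    nlinarith [Real.sqrt_nonneg |z|, sq_abs z, abs_nonneg z]
  rw [← Real.sqrt_eq_rpow]
  exact Real.sqrt_le_iff.2 ⟨by positivity, hjap⟩

lemma jap_rpow_half_div_jap_sq_mul_le (ξ θ w : ℝ) {η : ℝ} (hη : 0 < η) :
    jap ((η ^ 2 + θ ^ 2) / ξ) ^ (1 / 2 : ℝ) / jap w ^ 2 * (η / (η ^ 2 + θ ^ 2)) ≤
      (1 + w ^ 2)⁻¹ * (η / (η ^ 2 + θ ^ 2)) + (1 + w ^ 2)⁻¹ * (η / (√|ξ| * √(η ^ 2 + θ ^ 2))) := by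
  have hs : 0 < η ^ 2 + θ ^ 2 := by positivity
  have hsqrt : √|(η ^ 2 + θ ^ 2) / ξ| * (η / (η ^ 2 + θ ^ 2)) =
      η / (√|ξ| * √(η ^ 2 + θ ^ 2)) := by
    rw [abs_div, abs_of_pos hs, sqrt_div' _ (abs_nonneg ξ)]
    nth_rw 2 [← mul_self_sqrt hs.le]
    field_simp
  calc jap ((η ^ 2 + θ ^ 2) / ξ) ^ (1 / 2 : ℝ) / jap w ^ 2 * (η / (η ^ 2 + θ ^ 2))
      = jap ((η ^ 2 + θ ^ 2) / ξ) ^ (1 / 2 : ℝ) * ((1 + w ^ 2)⁻¹ * (η / (η ^ 2 + θ ^ 2))) := by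
        rw [jap_sq, div_eq_mul_inv]
        ring
    _ ≤ (1 + √|(η ^ 2 + θ ^ 2) / ξ|) * ((1 + w ^ 2)⁻¹ * (η / (η ^ 2 + θ ^ 2))) := by
        gcongr
        exact jap_rpow_half_le _
    _ = _ := by rw [← hsqrt]; ring

lemma ofReal_jap_rpow_half_div_jap_sq_mul_le (ξ θ w : ℝ) {η y : ℝ} (hη : 0 < η) (hy : 0 ≤ y) :
    ENNReal.ofReal
        (jap ((η ^ 2 + θ ^ 2) / ξ) ^ (1 / 2 : ℝ) / jap w ^ 2 * (η / (η ^ 2 + θ ^ 2)) * y) ≤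
      ENNReal.ofReal ((1 + w ^ 2)⁻¹) * ENNReal.ofReal (η / (η ^ 2 + θ ^ 2)) * ENNReal.ofReal y +
        ENNReal.ofReal ((1 + w ^ 2)⁻¹) * ENNReal.ofReal (η / (√|ξ| * √(η ^ 2 + θ ^ 2))) *
          ENNReal.ofReal y := by
  have hker := mul_le_mul_of_nonneg_right (jap_rpow_half_div_jap_sq_mul_le ξ θ w hη) hy
  rw [add_mul] at hker
  refine (ENNReal.ofReal_le_ofReal hker).trans_eq ?_
  have hw : 0 ≤ (1 + w ^ 2)⁻¹ := by positivity
  rw [ENNReal.ofReal_add (by positivity) (by positivity), ENNReal.ofReal_mul (by positivity),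
    ENNReal.ofReal_mul hw, ENNReal.ofReal_mul (by positivity), ENNReal.ofReal_mul hw]

lemma ENNReal.add_sq_le (a b : ℝ≥0∞) : (a + b) ^ 2 ≤ 2 * (a ^ 2 + b ^ 2) := by
  have h := ENNReal.rpow_add_le_mul_rpow_add_rpow a b (p := 2) one_le_two
  norm_num [ENNReal.rpow_two] at h
  exact h

lemma lintegral_comp_abs (f : ℝ → ℝ≥0∞) : ∫⁻ x, f |x| = 2 * ∫⁻ x in Ioi 0, f x := by
  have hpos : ∫⁻ x in Ioi 0, f |x| = ∫⁻ x in Ioi 0, f x :=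
    setLIntegral_congr_fun measurableSet_Ioi fun x hx => by rw [abs_of_pos hx]
  have hneg : ∫⁻ x in Iic 0, f |x| = ∫⁻ x in Ioi 0, f x := by
    have hreflect := (Measure.measurePreserving_neg (volume : Measure ℝ))
      |>.setLIntegral_comp_preimage_emb (Homeomorph.neg ℝ).measurableEmbedding f (Ici 0)
    rw [neg_preimage, neg_Ici, neg_zero] at hreflect
    rw [setLIntegral_congr Ioi_ae_eq_Ici, ← hreflect]
    exact setLIntegral_congr_fun measurableSet_Iic fun x hx => by rw [abs_of_nonpos hx]
  rw [← lintegral_add_compl _ measurableSet_Ioi, compl_Ioi, hpos, hneg, two_mul]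

lemma lintegral_inv_one_add_sq_sub (a : ℝ) :
    ∫⁻ x, ENNReal.ofReal ((1 + (x - a) ^ 2)⁻¹) = ENNReal.ofReal π := by
  rw [← ofReal_integral_eq_lintegral_ofReal (integrable_inv_one_add_sq.comp_sub_right a)
    (ae_of_all _ fun x => by positivity), integral_sub_right_eq_self (fun x => (1 + x ^ 2)⁻¹) a,
    integral_univ_inv_one_add_sq]

lemma setLIntegral_Ioi_two_mul_comp_sq_div_le {ξ : ℝ} (hξ : ξ ≠ 0) (g : ℝ → ℝ≥0∞) :
    ∫⁻ η in Ioi 0, ENNReal.ofReal (2 * η) * g (η ^ 2 / ξ) ≤ ENNReal.ofReal |ξ| * ∫⁻ u, g u := by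
  have hderiv : ∀ η ∈ Ioi (0 : ℝ), HasDerivWithinAt (fun η => η ^ 2 / ξ) (2 * η / ξ) (Ioi 0) η :=
    fun η _ => by simpa using ((hasDerivAt_pow 2 η).div_const ξ).hasDerivWithinAt
  have hinj : InjOn (fun η : ℝ => η ^ 2 / ξ) (Ioi 0) := fun a ha b hb hab =>
    (pow_left_inj₀ (le_of_lt ha) (le_of_lt hb) two_ne_zero).1 ((div_left_inj' hξ).1 hab)
  calc ∫⁻ η in Ioi 0, ENNReal.ofReal (2 * η) * g (η ^ 2 / ξ)
      = ENNReal.ofReal |ξ| * ∫⁻ η in Ioi 0, ENNReal.ofReal |2 * η / ξ| * g (η ^ 2 / ξ) := by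
        rw [← lintegral_const_mul' _ _ ENNReal.ofReal_ne_top]
        refine setLIntegral_congr_fun measurableSet_Ioi fun η hη => ?_
        rw [← mul_assoc, ← ENNReal.ofReal_mul (abs_nonneg _), abs_div,
          abs_of_pos (by simpa using hη : 0 < 2 * η), mul_div_cancel₀ _ (abs_ne_zero.2 hξ)]
    _ = ENNReal.ofReal |ξ| * ∫⁻ u in (fun η => η ^ 2 / ξ) '' Ioi 0, g u := by
        rw [lintegral_image_eq_lintegral_abs_deriv_mul measurableSet_Ioi hderiv hinj]
    _ ≤ ENNReal.ofReal |ξ| * ∫⁻ u, g u := by gcongr; exact Measure.restrict_le_self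

lemma setLIntegral_Ioo_zero_rpow {c r : ℝ} (hc : 0 < c) (hr : -1 < r) :
    ∫⁻ t in Ioo 0 c, ENNReal.ofReal (t ^ r) = ENNReal.ofReal (c ^ (r + 1) / (r + 1)) := by
  have hint : IntegrableOn (fun t : ℝ => t ^ r) (Ioc 0 c) := by
    rw [← intervalIntegrable_iff_integrableOn_Ioc_of_le hc.le]
    exact intervalIntegral.intervalIntegrable_rpow' hr
  rw [setLIntegral_congr Ioo_ae_eq_Ioc, ← ofReal_integral_eq_lintegral_ofReal hint
    ((ae_restrict_iff' measurableSet_Ioc).2 (ae_of_all _ fun t ht => rpow_nonneg ht.1.le _)),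
    ← intervalIntegral.integral_of_le hc.le, integral_rpow (Or.inl hr),
    zero_rpow (by linarith), sub_zero]

lemma setLIntegral_Ioi_rpow {c r : ℝ} (hc : 0 < c) (hr : r < -1) :
    ∫⁻ t in Ioi c, ENNReal.ofReal (t ^ r) = ENNReal.ofReal (-c ^ (r + 1) / (r + 1)) := by
  rw [← ofReal_integral_eq_lintegral_ofReal (integrableOn_Ioi_rpow_of_lt hr hc)
    ((ae_restrict_iff' measurableSet_Ioi).2
      (ae_of_all _ fun t ht => rpow_nonneg (hc.trans ht).le _)),
    integral_Ioi_rpow_of_lt hr hc]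

lemma setLIntegral_Ioi_rpow_div_sq_add_sq_le {p a : ℝ} (hp : -1 < p) (hp' : p < 1) (ha : 0 < a) :
    ∫⁻ t in Ioi 0, ENNReal.ofReal (t ^ p / (t ^ 2 + a ^ 2)) ≤
      ENNReal.ofReal ((1 / (p + 1) + 1 / (1 - p)) * a ^ (p - 1)) := by
  have hsplit : Ioi (0 : ℝ) ⊆ Ioo 0 a ∪ Ici a := fun t ht => by
    rcases lt_or_ge t a with h | h
    exacts [Or.inl ⟨ht, h⟩, Or.inr h]
  have hnear : ∫⁻ t in Ioo 0 a, ENNReal.ofReal (t ^ p / (t ^ 2 + a ^ 2)) ≤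
      ENNReal.ofReal (a ^ (p - 1) / (p + 1)) := by
    calc ∫⁻ t in Ioo 0 a, ENNReal.ofReal (t ^ p / (t ^ 2 + a ^ 2))
        ≤ ∫⁻ t in Ioo 0 a, ENNReal.ofReal (a ^ 2)⁻¹ * ENNReal.ofReal (t ^ p) := by
          refine setLIntegral_mono (by fun_prop) fun t ht => ?_
          rw [← ENNReal.ofReal_mul (by positivity), inv_mul_eq_div]
          have := rpow_nonneg ht.1.le p
          gcongr
          nlinarith
      _ = ENNReal.ofReal (a ^ (p - 1) / (p + 1)) := by
          rw [lintegral_const_mul' _ _ ENNReal.ofReal_ne_top, setLIntegral_Ioo_zero_rpow ha hp,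
            ← ENNReal.ofReal_mul (by positivity)]
          congr 1
          rw [show p + 1 = (p - 1) + 2 by ring, rpow_add ha, rpow_two]
          field_simp
  have hfar : ∫⁻ t in Ioi a, ENNReal.ofReal (t ^ p / (t ^ 2 + a ^ 2)) ≤
      ENNReal.ofReal (a ^ (p - 1) / (1 - p)) := by
    calc ∫⁻ t in Ioi a, ENNReal.ofReal (t ^ p / (t ^ 2 + a ^ 2))
        ≤ ∫⁻ t in Ioi a, ENNReal.ofReal (t ^ (p - 2)) := by
          refine setLIntegral_mono (by fun_prop) fun t ht => ?_
          have ht0 : 0 < t := ha.trans ht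
          rw [rpow_sub ht0, rpow_two]
          have := rpow_nonneg ht0.le p
          gcongr
          nlinarith
      _ = ENNReal.ofReal (a ^ (p - 1) / (1 - p)) := by
          rw [setLIntegral_Ioi_rpow ha (by linarith)]
          congr 1
          rw [show p - 2 + 1 = p - 1 by ring, neg_div, ← div_neg, neg_sub]
  have hpow : 0 < a ^ (p - 1) := rpow_pos_of_pos ha _
  calc ∫⁻ t in Ioi 0, ENNReal.ofReal (t ^ p / (t ^ 2 + a ^ 2))
      ≤ (∫⁻ t in Ioo 0 a, ENNReal.ofReal (t ^ p / (t ^ 2 + a ^ 2))) +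
          ∫⁻ t in Ici a, ENNReal.ofReal (t ^ p / (t ^ 2 + a ^ 2)) :=
        (lintegral_mono_set hsplit).trans (lintegral_union_le _ _ _)
    _ ≤ ENNReal.ofReal (a ^ (p - 1) / (p + 1)) + ENNReal.ofReal (a ^ (p - 1) / (1 - p)) := by
        rw [← setLIntegral_congr Ioi_ae_eq_Ici]
        exact add_le_add hnear hfar
    _ = ENNReal.ofReal ((1 / (p + 1) + 1 / (1 - p)) * a ^ (p - 1)) := by
        rw [← ENNReal.ofReal_add (div_nonneg hpow.le (by linarith))
          (div_nonneg hpow.le (by linarith))]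
        ring_nf

lemma lintegral_mul_abs_rpow_div_sq_add_sq_le {p a : ℝ} (hp : -1 < p) (hp' : p < 1) (ha : 0 < a)
    (c : ℝ) (hc : 0 ≤ c) :
    ∫⁻ θ, ENNReal.ofReal (c * |θ| ^ p / (a ^ 2 + θ ^ 2)) ≤
      ENNReal.ofReal (2 * c * (1 / (p + 1) + 1 / (1 - p)) * a ^ (p - 1)) := by
  have heven : ∀ θ : ℝ, c * |θ| ^ p / (a ^ 2 + θ ^ 2) = c * (|θ| ^ p / (|θ| ^ 2 + a ^ 2)) :=
    fun θ => by rw [sq_abs, add_comm, mul_div_assoc]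
  simp_rw [heven, ENNReal.ofReal_mul hc]
  rw [lintegral_comp_abs (fun t => ENNReal.ofReal c * ENNReal.ofReal (t ^ p / (t ^ 2 + a ^ 2))),
    lintegral_const_mul' _ _ ENNReal.ofReal_ne_top]
  calc 2 * (ENNReal.ofReal c * ∫⁻ t in Ioi 0, ENNReal.ofReal (t ^ p / (t ^ 2 + a ^ 2)))
      ≤ 2 * (ENNReal.ofReal c * ENNReal.ofReal ((1 / (p + 1) + 1 / (1 - p)) * a ^ (p - 1))) := by
        gcongr
        exact setLIntegral_Ioi_rpow_div_sq_add_sq_le hp hp' ha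
    _ = ENNReal.ofReal (2 * c * (1 / (p + 1) + 1 / (1 - p)) * a ^ (p - 1)) := by
        rw [← ENNReal.ofReal_mul hc, ← ENNReal.ofReal_ofNat 2, ← ENNReal.ofReal_mul zero_le_two]
        ring_nf

section Schur

variable {α β γ : Type*} [MeasurableSpace α] [MeasurableSpace β] [MeasurableSpace γ]
  {μ : Measure α} {ν : Measure β} {ρ : Measure γ}

lemma sq_lintegral_le_of_sq_le_mul {P A B : γ → ℝ≥0∞} (hA : AEMeasurable A ρ)
    (hB : AEMeasurable B ρ) (hPAB : ∀ᵐ x ∂ρ, P x ^ 2 ≤ A x * B x) :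
    (∫⁻ x, P x ∂ρ) ^ 2 ≤ (∫⁻ x, A x ∂ρ) * ∫⁻ x, B x ∂ρ := by
  have hsqrt : ∀ c : ℝ≥0∞, (c ^ (1 / 2 : ℝ)) ^ (2 : ℝ) = c := fun c => by
    rw [← ENNReal.rpow_mul]; norm_num
  have hP : ∀ᵐ x ∂ρ, P x ≤ A x ^ (1 / 2 : ℝ) * B x ^ (1 / 2 : ℝ) := by
    filter_upwards [hPAB] with x hx
    calc P x = (P x ^ 2) ^ (1 / 2 : ℝ) := by rw [← ENNReal.rpow_two, ← ENNReal.rpow_mul]; norm_num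
      _ ≤ (A x * B x) ^ (1 / 2 : ℝ) := ENNReal.rpow_le_rpow hx (by norm_num)
      _ = A x ^ (1 / 2 : ℝ) * B x ^ (1 / 2 : ℝ) := ENNReal.mul_rpow_of_nonneg _ _ (by norm_num)
  have hHolder := ENNReal.lintegral_mul_le_Lp_mul_Lq ρ Real.HolderConjugate.two_two
    (hA.pow_const (1 / 2 : ℝ)) (hB.pow_const (1 / 2 : ℝ))
  simp only [Pi.mul_apply, hsqrt] at hHolder
  calc (∫⁻ x, P x ∂ρ) ^ 2 ≤ ((∫⁻ x, A x ∂ρ) ^ (1 / 2 : ℝ) * (∫⁻ x, B x ∂ρ) ^ (1 / 2 : ℝ)) ^ 2 :=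
        by gcongr; exact (lintegral_mono_ae hP).trans hHolder
    _ = (∫⁻ x, A x ∂ρ) * ∫⁻ x, B x ∂ρ := by
        rw [mul_pow, ← ENNReal.rpow_two, ← ENNReal.rpow_two, hsqrt, hsqrt]

variable [SFinite ν] [SFinite ρ]

lemma lintegral_lintegral_mul_le {K : β → γ → ℝ≥0∞} {h : γ → ℝ≥0∞} {c : ℝ≥0∞}
    (hK : Measurable (uncurry K)) (hh : Measurable h) (hKc : ∀ᵐ η ∂ρ, ∫⁻ τ, K τ η ∂ν ≤ c) :
    ∫⁻ τ, ∫⁻ η, K τ η * h η ∂ρ ∂ν ≤ c * ∫⁻ η, h η ∂ρ := by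
  rw [lintegral_lintegral_swap (by fun_prop), ← lintegral_const_mul _ hh]
  refine lintegral_mono_ae ?_
  filter_upwards [hKc] with η hη
  rw [lintegral_mul_const _ (by fun_prop)]
  gcongr

variable [SFinite μ]

lemma lintegral_lintegral_sq_lintegral_le {G : β → γ → ℝ≥0∞} {P A B : α → γ → ℝ≥0∞}
    {M : α → ℝ≥0∞} {f : γ → ℝ≥0∞} {cG cB : ℝ≥0∞}
    (hGm : Measurable (uncurry G)) (hAm : Measurable (uncurry A)) (hBm : Measurable (uncurry B))
    (hMm : Measurable M) (hfm : Measurable f)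
    (hPAB : ∀ θ, ∀ᵐ η ∂ρ, P θ η ^ 2 ≤ A θ η * B θ η)
    (hG : ∀ η, ∫⁻ τ, G τ η ∂ν ≤ cG)
    (hA : ∀ᵐ θ ∂μ, ∀ τ, ∫⁻ η, G τ η * A θ η ∂ρ ≤ M θ)
    (hB : ∀ᵐ η ∂ρ, ∫⁻ θ, M θ * B θ η ∂μ ≤ cB) :
    ∫⁻ θ, ∫⁻ τ, (∫⁻ η, G τ η * P θ η * f η ∂ρ) ^ 2 ∂ν ∂μ ≤ cG * cB * ∫⁻ η, f η ^ 2 ∂ρ := by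
  have hCS : ∀ᵐ θ ∂μ, ∀ τ, (∫⁻ η, G τ η * P θ η * f η ∂ρ) ^ 2 ≤
      M θ * ∫⁻ η, G τ η * (B θ η * f η ^ 2) ∂ρ := by
    filter_upwards [hA] with θ hθ τ
    refine (sq_lintegral_le_of_sq_le_mul (by fun_prop) (by fun_prop) ?_).trans
      (mul_le_mul_left (hθ τ) _)
    filter_upwards [hPAB θ] with η hη
    calc (G τ η * P θ η * f η) ^ 2 = G τ η ^ 2 * P θ η ^ 2 * f η ^ 2 := by ring
      _ ≤ G τ η ^ 2 * (A θ η * B θ η) * f η ^ 2 := by gcongr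
      _ = G τ η * A θ η * (G τ η * (B θ η * f η ^ 2)) := by ring
  calc ∫⁻ θ, ∫⁻ τ, (∫⁻ η, G τ η * P θ η * f η ∂ρ) ^ 2 ∂ν ∂μ
      ≤ ∫⁻ θ, M θ * ∫⁻ τ, ∫⁻ η, G τ η * (B θ η * f η ^ 2) ∂ρ ∂ν ∂μ := by
        refine lintegral_mono_ae ?_
        filter_upwards [hCS] with θ hθ
        rw [← lintegral_const_mul _ (by fun_prop)]
        exact lintegral_mono hθ
    _ ≤ ∫⁻ θ, M θ * (cG * ∫⁻ η, B θ η * f η ^ 2 ∂ρ) ∂μ := by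
        gcongr with θ
        exact lintegral_lintegral_mul_le hGm (by fun_prop) (ae_of_all _ hG)
    _ = cG * ∫⁻ θ, ∫⁻ η, M θ * B θ η * f η ^ 2 ∂ρ ∂μ := by
        rw [← lintegral_const_mul _ (by fun_prop)]
        refine lintegral_congr fun θ => ?_
        rw [mul_left_comm, ← lintegral_const_mul (M θ) (by fun_prop)]
        simp_rw [mul_assoc]
    _ ≤ cG * cB * ∫⁻ η, f η ^ 2 ∂ρ := by
        rw [mul_assoc]
        gcongr
        exact lintegral_lintegral_mul_le (by fun_prop) (by fun_prop) hB

end Schur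

lemma lintegral_lintegral_sq_lintegral_poisson_le {G : ℝ → ℝ → ℝ≥0∞} {cG : ℝ≥0∞}
    (hGm : Measurable (uncurry G)) (hG1 : ∀ τ η, G τ η ≤ 1) (hG : ∀ η, ∫⁻ τ, G τ η ≤ cG)
    {f : ℝ → ℝ≥0∞} (hf : Measurable f) :
    ∫⁻ θ, ∫⁻ τ, (∫⁻ η in Ioi 0, G τ η * ENNReal.ofReal (η / (η ^ 2 + θ ^ 2)) * f η) ^ 2 ≤
      cG * ENNReal.ofReal (128 / 9) * ∫⁻ η in Ioi 0, f η ^ 2 := by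
  refine lintegral_lintegral_sq_lintegral_le (ρ := volume.restrict (Ioi 0))
    (A := fun θ η => ENNReal.ofReal (η ^ (1 / 2 : ℝ) / (η ^ 2 + θ ^ 2)))
    (B := fun θ η => ENNReal.ofReal (η ^ (3 / 2 : ℝ) / (η ^ 2 + θ ^ 2)))
    (M := fun θ => ENNReal.ofReal (8 / 3 * |θ| ^ (-1 / 2 : ℝ))) hGm (by fun_prop) (by fun_prop)
    (by fun_prop) hf (fun θ => ?_) hG ?_ ?_
  · refine (ae_restrict_iff' measurableSet_Ioi).2 (ae_of_all _ fun η (hη : 0 < η) => le_of_eq ?_)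
    rw [← ENNReal.ofReal_pow (by positivity), ← ENNReal.ofReal_mul (by positivity)]
    congr 1
    rw [div_pow, div_mul_div_comm, ← rpow_add hη, ← sq]
    norm_num
  · filter_upwards [Measure.ae_ne volume 0] with θ hθ τ
    calc ∫⁻ η in Ioi 0, G τ η * ENNReal.ofReal (η ^ (1 / 2 : ℝ) / (η ^ 2 + θ ^ 2))
        ≤ ∫⁻ η in Ioi 0, ENNReal.ofReal (η ^ (1 / 2 : ℝ) / (η ^ 2 + |θ| ^ 2)) := by
          refine lintegral_mono fun η => ?_
          rw [sq_abs]
          exact mul_le_of_le_one_left bot_le (hG1 τ η)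
      _ ≤ ENNReal.ofReal (8 / 3 * |θ| ^ (-1 / 2 : ℝ)) :=
          (setLIntegral_Ioi_rpow_div_sq_add_sq_le (by norm_num) (by norm_num)
            (abs_pos.2 hθ)).trans_eq (by norm_num)
  · refine (ae_restrict_iff' measurableSet_Ioi).2 (ae_of_all _ fun η (hη : 0 < η) => ?_)
    calc ∫⁻ θ, ENNReal.ofReal (8 / 3 * |θ| ^ (-1 / 2 : ℝ)) *
          ENNReal.ofReal (η ^ (3 / 2 : ℝ) / (η ^ 2 + θ ^ 2))
        = ∫⁻ θ,
            ENNReal.ofReal (8 / 3 * η ^ (3 / 2 : ℝ) * |θ| ^ (-1 / 2 : ℝ) / (η ^ 2 + θ ^ 2)) := by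
          refine lintegral_congr fun θ => ?_
          rw [← ENNReal.ofReal_mul (by positivity)]
          congr 1
          ring
      _ ≤ ENNReal.ofReal (2 * (8 / 3 * η ^ (3 / 2 : ℝ)) * (1 / (-1 / 2 + 1) + 1 / (1 - -1 / 2)) *
            η ^ (-1 / 2 - 1 : ℝ)) :=
          lintegral_mul_abs_rpow_div_sq_add_sq_le (by norm_num) (by norm_num) hη _ (by positivity)
      _ = ENNReal.ofReal (128 / 9) := by
          congr 1
          rw [show (-1 / 2 - 1 : ℝ) = -(3 / 2) by norm_num, rpow_neg hη.le]
          field_simp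
          norm_num

lemma lintegral_lintegral_sq_lintegral_dispersive_le {ξ : ℝ} (hξ : ξ ≠ 0) (c : ℝ)
    {f : ℝ → ℝ≥0∞} (hf : Measurable f) :
    ∫⁻ θ, ∫⁻ τ, (∫⁻ η in Ioi 0, ENNReal.ofReal ((1 + (τ - c - η ^ 2 / ξ) ^ 2)⁻¹) *
      ENNReal.ofReal (η / (√|ξ| * √(η ^ 2 + θ ^ 2))) * f η) ^ 2 ≤
      ENNReal.ofReal π * ENNReal.ofReal (2 * π) * ∫⁻ η in Ioi 0, f η ^ 2 := by
  have hξ0 : 0 < |ξ| := abs_pos.2 hξ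
  refine lintegral_lintegral_sq_lintegral_le (ρ := volume.restrict (Ioi 0))
    (A := fun _ η => ENNReal.ofReal (2 * η))
    (B := fun θ η => ENNReal.ofReal (η / (2 * |ξ| * (η ^ 2 + θ ^ 2))))
    (M := fun _ => ENNReal.ofReal (π * |ξ|)) (by fun_prop) (by fun_prop) (by fun_prop)
    (by fun_prop) hf (fun θ => ?_) (fun η => ?_) (ae_of_all _ fun θ τ => ?_) ?_
  · refine (ae_restrict_iff' measurableSet_Ioi).2 (ae_of_all _ fun η (hη : 0 < η) => le_of_eq ?_)
    rw [← ENNReal.ofReal_pow (by positivity), ← ENNReal.ofReal_mul (by positivity)]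
    congr 1
    rw [div_pow, mul_pow, sq_sqrt hξ0.le, sq_sqrt (by positivity)]
    field_simp
  · simp_rw [sub_sub]
    exact (lintegral_inv_one_add_sq_sub _).le
  · have hg : ∫⁻ u, ENNReal.ofReal ((1 + (τ - c - u) ^ 2)⁻¹) = ENNReal.ofReal π := by
      simp_rw [← neg_sub _ (τ - c), neg_sq]
      exact lintegral_inv_one_add_sq_sub _
    calc ∫⁻ η in Ioi 0, ENNReal.ofReal ((1 + (τ - c - η ^ 2 / ξ) ^ 2)⁻¹) * ENNReal.ofReal (2 * η)
        = ∫⁻ η in Ioi 0, ENNReal.ofReal (2 * η) *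
            ENNReal.ofReal ((1 + (τ - c - η ^ 2 / ξ) ^ 2)⁻¹) := by simp_rw [mul_comm]
      _ ≤ ENNReal.ofReal |ξ| * ENNReal.ofReal π := by
          rw [← hg]
          exact setLIntegral_Ioi_two_mul_comp_sq_div_le hξ
            (fun u => ENNReal.ofReal ((1 + (τ - c - u) ^ 2)⁻¹))
      _ = ENNReal.ofReal (π * |ξ|) := by rw [← ENNReal.ofReal_mul hξ0.le, mul_comm]
  · refine (ae_restrict_iff' measurableSet_Ioi).2 (ae_of_all _ fun η (hη : 0 < η) => ?_)
    calc ∫⁻ θ, ENNReal.ofReal (π * |ξ|) * ENNReal.ofReal (η / (2 * |ξ| * (η ^ 2 + θ ^ 2)))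
        = ∫⁻ θ, ENNReal.ofReal (π / 2 * η * |θ| ^ (0 : ℝ) / (η ^ 2 + θ ^ 2)) := by
          refine lintegral_congr fun θ => ?_
          rw [← ENNReal.ofReal_mul (by positivity), rpow_zero]
          congr 1
          field_simp
      _ ≤ ENNReal.ofReal (2 * (π / 2 * η) * (1 / (0 + 1) + 1 / (1 - 0)) * η ^ (0 - 1 : ℝ)) :=
          lintegral_mul_abs_rpow_div_sq_add_sq_le (by norm_num) (by norm_num) hη _ (by positivity)
      _ = ENNReal.ofReal (2 * π) := by
          congr 1
          rw [zero_sub, rpow_neg_one]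
          field_simp
          norm_num

lemma lintegral_lintegral_sq_lintegral_kernel_le {ξ : ℝ} (hξ : ξ ≠ 0) (c : ℝ) {f : ℝ → ℝ}
    (hf : Measurable f) (hf0 : ∀ η, 0 ≤ f η) :
    ∫⁻ θ, ∫⁻ τ, (∫⁻ η in Ioi 0, ENNReal.ofReal (jap ((η ^ 2 + θ ^ 2) / ξ) ^ (1 / 2 : ℝ) /
      jap (τ - c - η ^ 2 / ξ) ^ 2 * (η / (η ^ 2 + θ ^ 2)) * f η)) ^ 2 ≤
      ENNReal.ofReal 196 * ∫⁻ η in Ioi 0, ENNReal.ofReal (f η ^ 2) := by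
  set G : ℝ → ℝ → ℝ≥0∞ := fun τ η => ENNReal.ofReal ((1 + (τ - c - η ^ 2 / ξ) ^ 2)⁻¹)
  set F : ℝ → ℝ≥0∞ := fun η => ENNReal.ofReal (f η)
  set I₁ : ℝ → ℝ → ℝ≥0∞ := fun θ τ =>
    ∫⁻ η in Ioi 0, G τ η * ENNReal.ofReal (η / (η ^ 2 + θ ^ 2)) * F η
  set I₂ : ℝ → ℝ → ℝ≥0∞ := fun θ τ =>
    ∫⁻ η in Ioi 0, G τ η * ENNReal.ofReal (η / (√|ξ| * √(η ^ 2 + θ ^ 2))) * F η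
  have hsplit : ∀ θ τ, ∫⁻ η in Ioi 0, ENNReal.ofReal (jap ((η ^ 2 + θ ^ 2) / ξ) ^ (1 / 2 : ℝ) /
      jap (τ - c - η ^ 2 / ξ) ^ 2 * (η / (η ^ 2 + θ ^ 2)) * f η) ≤ I₁ θ τ + I₂ θ τ := by
    intro θ τ
    rw [← lintegral_add_left (by fun_prop)]
    exact setLIntegral_mono' measurableSet_Ioi fun η hη =>
      ofReal_jap_rpow_half_div_jap_sq_mul_le ξ θ _ hη (hf0 η)
  have hG1 : ∀ τ η, G τ η ≤ 1 := fun τ η =>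
    ENNReal.ofReal_le_one.2 (inv_le_one_of_one_le₀ (le_add_of_nonneg_right (sq_nonneg _)))
  have hG : ∀ η, ∫⁻ τ, G τ η ≤ ENNReal.ofReal π := fun η => by
    simp_rw [G, sub_sub]
    exact (lintegral_inv_one_add_sq_sub _).le
  have hF : Measurable F := by fun_prop
  calc ∫⁻ θ, ∫⁻ τ, (∫⁻ η in Ioi 0, ENNReal.ofReal (jap ((η ^ 2 + θ ^ 2) / ξ) ^ (1 / 2 : ℝ) /
        jap (τ - c - η ^ 2 / ξ) ^ 2 * (η / (η ^ 2 + θ ^ 2)) * f η)) ^ 2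
      ≤ ∫⁻ θ, ∫⁻ τ, 2 * (I₁ θ τ ^ 2 + I₂ θ τ ^ 2) := by
        gcongr with θ τ
        exact (pow_le_pow_left' (hsplit θ τ) 2).trans (ENNReal.add_sq_le _ _)
    _ = 2 * ((∫⁻ θ, ∫⁻ τ, I₁ θ τ ^ 2) + ∫⁻ θ, ∫⁻ τ, I₂ θ τ ^ 2) := by
        rw [← lintegral_add_left (by fun_prop), ← lintegral_const_mul _ (by fun_prop)]
        refine lintegral_congr fun θ => ?_
        rw [← lintegral_add_left (by fun_prop), ← lintegral_const_mul _ (by fun_prop)]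
    _ ≤ 2 * (ENNReal.ofReal π * ENNReal.ofReal (128 / 9) * (∫⁻ η in Ioi 0, F η ^ 2) +
          ENNReal.ofReal π * ENNReal.ofReal (2 * π) * ∫⁻ η in Ioi 0, F η ^ 2) := by
        have h₁ : ∫⁻ θ, ∫⁻ τ, I₁ θ τ ^ 2 ≤
            ENNReal.ofReal π * ENNReal.ofReal (128 / 9) * ∫⁻ η in Ioi 0, F η ^ 2 :=
          lintegral_lintegral_sq_lintegral_poisson_le (by fun_prop) hG1 hG hF
        have h₂ : ∫⁻ θ, ∫⁻ τ, I₂ θ τ ^ 2 ≤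
            ENNReal.ofReal π * ENNReal.ofReal (2 * π) * ∫⁻ η in Ioi 0, F η ^ 2 :=
          lintegral_lintegral_sq_lintegral_dispersive_le hξ c hF
        exact mul_le_mul_right (add_le_add h₁ h₂) 2
    _ ≤ ENNReal.ofReal 196 * ∫⁻ η in Ioi 0, ENNReal.ofReal (f η ^ 2) := by
        simp_rw [F, ← ENNReal.ofReal_pow (hf0 _), ← add_mul, ← mul_assoc]
        gcongr
        rw [← ENNReal.ofReal_mul pi_pos.le, ← ENNReal.ofReal_mul pi_pos.le,
          ← ENNReal.ofReal_add (by positivity) (by positivity), ← ENNReal.ofReal_ofNat 2,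
          ← ENNReal.ofReal_mul zero_le_two]
        exact ENNReal.ofReal_le_ofReal (by nlinarith [pi_pos, pi_le_four])

/-- Core estimate in the proof of `‖μ(t) W₂ h‖_{X^{0,1/2}} ≲ ‖χ_{t>0} h‖_{ℋ⁰}`:
`(∫_{ℝ³} (∫_0^∞ ⟨(η²+θ²)/ξ⟩^{1/2} ⟨τ − ξ⁵ − η²/ξ⟩^{−2} (η/(η²+θ²)) ψ(ξ,η) dη)² dτ dθ dξ)^{1/2}
  ≤ C (∫_ℝ ∫_0^∞ ψ(ξ,η)² dη dξ)^{1/2}`. -/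
theorem stmt10 :
    ∃ C > (0:ℝ), ∀ ψ : ℝ → ℝ → ℝ, Measurable (Function.uncurry ψ) →
      (∀ ξ η : ℝ, 0 ≤ ψ ξ η) →
      (∫⁻ ξ : ℝ, ∫⁻ θ : ℝ, ∫⁻ τ : ℝ,
        (∫⁻ η in Set.Ioi (0:ℝ), ENNReal.ofReal
          (jap ((η ^ 2 + θ ^ 2) / ξ) ^ ((1:ℝ)/2) / jap (τ - ξ ^ 5 - η ^ 2 / ξ) ^ 2 *
            (η / (η ^ 2 + θ ^ 2)) * ψ ξ η)) ^ 2) ^ ((1:ℝ)/2) ≤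
      ENNReal.ofReal C *
        (∫⁻ ξ : ℝ, ∫⁻ η in Set.Ioi (0:ℝ), ENNReal.ofReal (ψ ξ η ^ 2)) ^ ((1:ℝ)/2) := by
  refine ⟨14, by norm_num, fun ψ hψ hψ0 => ?_⟩
  have hslice : ∀ᵐ ξ : ℝ, ∫⁻ θ, ∫⁻ τ, (∫⁻ η in Ioi 0, ENNReal.ofReal
      (jap ((η ^ 2 + θ ^ 2) / ξ) ^ (1 / 2 : ℝ) / jap (τ - ξ ^ 5 - η ^ 2 / ξ) ^ 2 *
        (η / (η ^ 2 + θ ^ 2)) * ψ ξ η)) ^ 2 ≤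
      ENNReal.ofReal 196 * ∫⁻ η in Ioi 0, ENNReal.ofReal (ψ ξ η ^ 2) := by
    filter_upwards [Measure.ae_ne volume 0] with ξ hξ
    exact lintegral_lintegral_sq_lintegral_kernel_le hξ (ξ ^ 5)
      (hψ.comp measurable_prodMk_left) (hψ0 ξ)
  have hsqrt : ENNReal.ofReal 196 ^ (1 / 2 : ℝ) = ENNReal.ofReal 14 := by
    rw [show (196 : ℝ) = 14 ^ 2 by norm_num, ENNReal.ofReal_pow (by norm_num),
      ← ENNReal.rpow_natCast, ← ENNReal.rpow_mul]
    norm_num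
  refine (ENNReal.rpow_le_rpow (lintegral_mono_ae hslice) (by norm_num)).trans_eq ?_
  rw [lintegral_const_mul' _ _ ENNReal.ofReal_ne_top,
    ENNReal.mul_rpow_of_nonneg _ _ (by norm_num), hsqrt]
end
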